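/- arXiv:cs/0303001 — 3 statements merged into one kernel-verified Lean document; each statement's English description precedes it below -/
import Mathlib

section
/- If a metric D' ε-approximates a metric D on a finite point set P (meaning: for all p,q,r,s ∈ P, D'(p,q) ≤ D'(r,s) implies D(p,q) ≤ (1+ε)·D(r,s)), and T' is a minimum spanning tree of P under D', then the total D-weight of T' is at most (1+ε) times the total D-weight of a minimum spanning tree of P under D. -/
/-! The edges of a minimum spanning tree `T'` for `D'` can be matched bijectively with the edges
of any spanning tree `S` so that each edge of `T'` is `D'`-lighter than its partner. Pick
`e ∈ T' \ S`; the `S`-path between the ends of `e` crosses the cut of `T' - e` along an edge `f`.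
Both `T' - e + f` and `S - f + e` are spanning trees, so minimality of `T'` gives
`D'(e) ≤ D'(f)`, and induction on `|T' \ S|` applies to `S - f + e`. The approximation hypothesis
turns each matched pair into `D(e) ≤ (1 + ε) D(f)`; summing gives the bound. -/

open scoped Classical

/-- The weight of (the edges of) a graph `G` on a finite vertex set under an
edge-weight function `w`. -/
noncomputable def treeWeight {V : Type*} [Fintype V] (w : Sym2 V → ℝ)
    (G : SimpleGraph V) : ℝ :=
  ∑ e ∈ (Set.toFinite G.edgeSet).toFinset, w e

theorem exists_equiv_insert_sdiff_singleton_le {α β : Type*} [Preorder β] {s : Set α} {e f : α}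
    {w : α → β} (hf : f ∈ s) (he : e ∉ s) (hw : w e ≤ w f) :
    ∃ τ : ↥(insert e (s \ {f})) ≃ s, ∀ g : ↥(insert e (s \ {f})), w g ≤ w (τ g) := by
  have hef : e ≠ f := fun h => he (h ▸ hf)
  have hmem : ∀ g, g ∈ insert e (s \ {f}) ↔ Equiv.swap e f g ∈ s := by
    intro g
    rcases eq_or_ne g e with rfl | hge
    · simp [hf]
    rcases eq_or_ne g f with rfl | hgf
    · simp [he, hge]
    simp [Equiv.swap_apply_of_ne_of_ne hge hgf, hge, hgf]
  refine ⟨(Equiv.swap e f).subtypeEquiv hmem, fun ⟨g, hg⟩ => ?_⟩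
  rcases eq_or_ne g e with rfl | hge
  · simpa using hw
  have hgf : g ≠ f := by rintro rfl; simp [hef.symm] at hg
  simp [Equiv.swap_apply_of_ne_of_ne hge hgf]

namespace SimpleGraph

variable {V : Type*} {G T S : SimpleGraph V} {a b x y : V}

theorem Connected.reachable_deleteEdges_or (hG : G.Connected) (v : V) :
    (G.deleteEdges {s(a, b)}).Reachable a v ∨ (G.deleteEdges {s(a, b)}).Reachable b v := by
  classical
  obtain ⟨p, hp⟩ := hG.exists_isPath v a
  by_cases hab : s(a, b) ∈ p.edges
  · have hb := p.snd_mem_support_of_mem_edges hab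
    have ha := Walk.endpoint_notMem_support_takeUntil hp hb (p.adj_of_mem_edges hab).ne
    refine .inr (reachable_deleteEdges_iff_exists_walk.2 ⟨p.takeUntil b hb, ?_⟩).symm
    exact fun h => ha ((p.takeUntil b hb).fst_mem_support_of_mem_edges h)
  · exact .inl (reachable_deleteEdges_iff_exists_walk.2 ⟨p, hab⟩).symm

theorem not_adj_of_not_reachable_deleteEdges {e : Sym2 V}
    (hxy : ¬(G.deleteEdges {e}).Reachable x y) (hne : s(x, y) ≠ e) : ¬G.Adj x y :=
  fun h => hxy (Adj.reachable ((deleteEdges_adj ..).2 ⟨h, hne⟩))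

theorem edgeSet_deleteEdges_sup_edge {e : Sym2 V} (hxy : x ≠ y) :
    (G.deleteEdges {e} ⊔ edge x y).edgeSet = insert s(x, y) (G.edgeSet \ {e}) := by
  rw [edgeSet_sup, edgeSet_deleteEdges, edgeSet_edge_of_ne hxy, Set.union_singleton]

theorem IsTree.deleteEdges_sup_edge_of_not_reachable (hG : G.IsTree)
    (hxy : ¬(G.deleteEdges {s(a, b)}).Reachable x y) :
    (G.deleteEdges {s(a, b)} ⊔ edge x y).IsTree := by
  set G₀ := G.deleteEdges {s(a, b)}
  have hle : G₀ ≤ G₀ ⊔ edge x y := le_sup_left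
  have hxy' : (G₀ ⊔ edge x y).Reachable x y :=
    Adj.reachable (Or.inr ((edge_adj x y x y).2 ⟨.inl ⟨rfl, rfl⟩, fun h => hxy (h ▸ .rfl)⟩))
  -- `x` and `y` lie on different sides of the cut, so the new edge reconnects `a` and `b`
  have hab : (G₀ ⊔ edge x y).Reachable a b := by
    rcases hG.connected.reachable_deleteEdges_or (a := a) (b := b) x with hx | hx <;>
      rcases hG.connected.reachable_deleteEdges_or (a := a) (b := b) y with hy | hy
    · exact absurd (hx.symm.trans hy) hxy
    · exact (hx.mono hle).trans (hxy'.trans (hy.mono hle).symm)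
    · exact (hy.mono hle).trans (hxy'.symm.trans (hx.mono hle).symm)
    · exact absurd (hx.symm.trans hy) hxy
  have : Nonempty V := ⟨a⟩
  refine ⟨(connected_iff_exists_forall_reachable _).2 ⟨a, fun v => ?_⟩, ?_⟩
  · rcases hG.connected.reachable_deleteEdges_or (a := a) (b := b) v with hv | hv
    · exact hv.mono hle
    · exact hab.trans (hv.mono hle)
  · exact (hG.isAcyclic.anti (deleteEdges_le _)).sup_edge_of_not_reachable hxy

theorem IsTree.exists_exchange (hT : T.IsTree) (hS : S.IsTree) (hab : T.Adj a b) :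
    ∃ x y, S.Adj x y ∧ ¬(T.deleteEdges {s(a, b)}).Reachable x y ∧
      ¬(S.deleteEdges {s(x, y)}).Reachable a b := by
  have hbridge : ¬(T.deleteEdges {s(a, b)}).Reachable a b :=
    isAcyclic_iff_forall_adj_isBridge.1 hT.isAcyclic hab
  obtain ⟨p, hp, hpu⟩ := hS.existsUnique_path a b
  obtain ⟨d, hd, hx, hy⟩ :=
    p.exists_boundary_dart {v | (T.deleteEdges {s(a, b)}).Reachable a v} .rfl hbridge
  refine ⟨d.fst, d.snd, d.adj, fun h => hy (hx.trans h), ?_⟩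
  rw [reachable_deleteEdges_iff_exists_walk]
  rintro ⟨q, hq⟩
  apply hq
  apply q.edges_bypass_subset_edges
  rw [hpu _ q.bypass_isPath]
  exact List.mem_map_of_mem hd

end SimpleGraph

section MinSpanningTree

open SimpleGraph

variable {V : Type*} [Fintype V] {w : Sym2 V → ℝ} {G H T S : SimpleGraph V}

theorem treeWeight_eq_sum_subtype (w : Sym2 V → ℝ) (G : SimpleGraph V) :
    treeWeight w G = ∑ e : G.edgeSet, w e := by
  rw [treeWeight, Finset.sum_subtype]
  simp

theorem treeWeight_add_of_edgeSet_eq {e f : Sym2 V} (h : H.edgeSet = insert f (G.edgeSet \ {e}))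
    (he : e ∈ G.edgeSet) (hf : f ∉ G.edgeSet) :
    treeWeight w H + w e = treeWeight w G + w f := by
  have hH : (Set.toFinite H.edgeSet).toFinset =
      insert f ((Set.toFinite G.edgeSet).toFinset.erase e) := by
    ext g
    simp [h, and_comm]
  rw [treeWeight, treeWeight, hH, Finset.sum_insert (by simp [hf]), add_assoc,
    Finset.sum_erase_add _ _ (by simpa using he), add_comm]

def IsMinSpanningTree (w : Sym2 V → ℝ) (T : SimpleGraph V) : Prop :=
  T.IsTree ∧ ∀ G : SimpleGraph V, G.IsTree → treeWeight w T ≤ treeWeight w G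

theorem IsMinSpanningTree.le_of_not_reachable {a b x y : V} (hT : IsMinSpanningTree w T)
    (hab : T.Adj a b) (hxy : ¬(T.deleteEdges {s(a, b)}).Reachable x y) :
    w s(a, b) ≤ w s(x, y) := by
  by_cases hfe : s(x, y) = s(a, b)
  · rw [hfe]
  have hne : x ≠ y := fun h => hxy (h ▸ .rfl)
  have hswap := treeWeight_add_of_edgeSet_eq (w := w) (edgeSet_deleteEdges_sup_edge hne)
    (T.mem_edgeSet.2 hab) (not_adj_of_not_reachable_deleteEdges hxy hfe)
  have hmin := hT.2 _ (hT.1.deleteEdges_sup_edge_of_not_reachable hxy)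
  linarith

theorem IsMinSpanningTree.exists_equiv_edgeSet_le (hT : IsMinSpanningTree w T) (hS : S.IsTree) :
    ∃ σ : T.edgeSet ≃ S.edgeSet, ∀ e : T.edgeSet, w e ≤ w (σ e) := by
  induction hn : (T.edgeSet \ S.edgeSet).ncard using Nat.strong_induction_on generalizing S with
  | _ n ih =>
  obtain hTS | ⟨e, heT, heS⟩ := (T.edgeSet \ S.edgeSet).eq_empty_or_nonempty
  · obtain rfl : T = S := (isTree_iff_minimal_connected.1 hS).eq_of_le hT.1.connected
      (edgeSet_subset_edgeSet.1 (Set.sdiff_eq_empty.1 hTS))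
    exact ⟨Equiv.refl _, fun _ => le_rfl⟩
  have hpos : 0 < n := by
    rw [← hn]
    exact (Set.ncard_pos (Set.toFinite _)).2 ⟨e, heT, heS⟩
  induction e using Sym2.ind with | _ a b => ?_
  obtain ⟨x, y, hxy, hT₀, hS₀⟩ := hT.1.exists_exchange hS heT
  have hfT : ¬T.Adj x y :=
    not_adj_of_not_reachable_deleteEdges hT₀ fun h => heS (h ▸ hxy)
  have hS₂ := edgeSet_deleteEdges_sup_edge (G := S) (e := s(x, y)) heT.ne
  have hcard : (T.edgeSet \ (S.deleteEdges {s(x, y)} ⊔ edge a b).edgeSet).ncard = n - 1 := by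
    rw [hS₂, ← hn, ← Set.ncard_sdiff_singleton_of_mem (Set.mem_sdiff_of_mem heT heS)]
    congr 1
    ext g
    simp only [Set.mem_sdiff, Set.mem_insert_iff, Set.mem_singleton_iff]
    grind [mem_edgeSet]
  obtain ⟨σ, hσ⟩ := ih (n - 1) (by omega) (hS.deleteEdges_sup_edge_of_not_reachable hS₀) hcard
  obtain ⟨τ, hτ⟩ := exists_equiv_insert_sdiff_singleton_le (w := w) hxy heS
    (hT.le_of_not_reachable heT hT₀)
  exact ⟨σ.trans ((Equiv.setCongr hS₂).trans τ),
    fun g => (hσ g).trans (hτ (Equiv.setCongr hS₂ (σ g)))⟩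

end MinSpanningTree

theorem mst_of_approx_metric_general {V : Type*} [Fintype V] (ε : ℝ)
    (D D' : V → V → ℝ)
    (hDsymm : ∀ a b, D a b = D b a) (hD'symm : ∀ a b, D' a b = D' b a)
    (happrox : ∀ p q r s : V, D' p q ≤ D' r s → D p q ≤ (1 + ε) * D r s)
    (T' Topt : SimpleGraph V) (hT' : T'.IsTree) (hTopt : Topt.IsTree)
    (hmin' : ∀ G : SimpleGraph V, G.IsTree →
      treeWeight (Sym2.lift ⟨D', hD'symm⟩) T' ≤ treeWeight (Sym2.lift ⟨D', hD'symm⟩) G) :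
    treeWeight (Sym2.lift ⟨D, hDsymm⟩) T'
      ≤ (1 + ε) * treeWeight (Sym2.lift ⟨D, hDsymm⟩) Topt := by
  have happrox₂ : ∀ e f : Sym2 V, Sym2.lift ⟨D', hD'symm⟩ e ≤ Sym2.lift ⟨D', hD'symm⟩ f →
      Sym2.lift ⟨D, hDsymm⟩ e ≤ (1 + ε) * Sym2.lift ⟨D, hDsymm⟩ f := by
    intro e f
    induction e using Sym2.ind with | _ p q => ?_
    induction f using Sym2.ind with | _ r s => exact happrox p q r s
  obtain ⟨σ, hσ⟩ := IsMinSpanningTree.exists_equiv_edgeSet_le ⟨hT', hmin'⟩ hTopt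
  rw [treeWeight_eq_sum_subtype, treeWeight_eq_sum_subtype, Finset.mul_sum, ← σ.sum_comp]
  exact Finset.sum_le_sum fun e _ => happrox₂ e (σ e) (hσ e)

/-- If `D'` ε-approximates `D` (i.e. `D'(p,q) ≤ D'(r,s)` implies
`D(p,q) ≤ (1+ε)·D(r,s)`), and `T'` is a minimum spanning tree under `D'` while
`Topt` is a minimum spanning tree under `D`, then the `D`-weight of `T'` is at
most `(1+ε)` times the `D`-weight of `Topt`. -/
theorem mst_of_approx_metric {V : Type*} [Fintype V] (ε : ℝ) (hε : 0 ≤ ε)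
    (D D' : V → V → ℝ)
    (hDsymm : ∀ a b, D a b = D b a) (hD'symm : ∀ a b, D' a b = D' b a)
    (hDnonneg : ∀ a b, 0 ≤ D a b) (hD'nonneg : ∀ a b, 0 ≤ D' a b)
    (happrox : ∀ p q r s : V, D' p q ≤ D' r s → D p q ≤ (1 + ε) * D r s)
    (T' Topt : SimpleGraph V) (hT' : T'.IsTree) (hTopt : Topt.IsTree)
    (hmin' : ∀ G : SimpleGraph V, G.IsTree →
      treeWeight (Sym2.lift ⟨D', hD'symm⟩) T' ≤ treeWeight (Sym2.lift ⟨D', hD'symm⟩) G)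
    (hmin : ∀ G : SimpleGraph V, G.IsTree →
      treeWeight (Sym2.lift ⟨D, hDsymm⟩) Topt ≤ treeWeight (Sym2.lift ⟨D, hDsymm⟩) G) :
    treeWeight (Sym2.lift ⟨D, hDsymm⟩) T'
      ≤ (1 + ε) * treeWeight (Sym2.lift ⟨D, hDsymm⟩) Topt :=
  mst_of_approx_metric_general ε D D' hDsymm hD'symm happrox T' Topt hT' hTopt hmin'
end

section
/- Exchange argument for spanning trees: let D and D' be distance functions on a finite set P such that D' ε-approximates D, let T' be an MST under D' with edges e'₁,…,e'_{n-1} sorted by increasing D'-weight, and let T be any spanning tree. Then there is a sequence of spanning trees T = T₀, T₁, …, T_{n-1} = T' where Tᵢ is obtained from T_{i-1} by inserting e'ᵢ and deleting an edge eᵢ of the created cycle with D'(e'ᵢ) ≤ D'(eᵢ); consequently D(e'ᵢ) ≤ (1+ε)D(eᵢ) for every i, and weight_D(T') ≤ (1+ε)·weight_D(T). -/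
open scoped Classical

/-! Insert the edges `e' i` of `T'` into `T` in increasing `D'`-order. If `e' i` is not yet
present, the path in the current tree `S` between its ends has an edge `g ∉ T'`, and exchanging
`g` for `e' i` gives a spanning tree again. Were `D' g < D' (e' i)`, every edge on the `T'`-path
between the ends of `g` would be lighter than `g` (cycle property of the minimum spanning tree
`T'`), hence an earlier `e' j`, hence in `S`; with `g` it would close a cycle in `S`.
An edge removed at step `i` is none of the edges inserted before, so it is an edge of `T` not
removed before: the removed edges are distinct edges of `T`, and summing
`D (e' i) ≤ (1 + ε) D (e i)` bounds the weight. -/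

theorem Fin.exists_chain {α β : Type*} {N : ℕ} (p : Fin (N + 1) → α → Prop)
    (r : Fin N → α → α → β → Prop) {x₀ : α} (h₀ : p 0 x₀)
    (hstep : ∀ i x, p i.castSucc x → ∃ y b, r i x y b ∧ p i.succ y) :
    ∃ (xs : Fin (N + 1) → α) (bs : Fin N → β), xs 0 = x₀ ∧ (∀ i, p i (xs i)) ∧
      ∀ i, r i (xs i.castSucc) (xs i.succ) (bs i) := by
  induction N with
  | zero =>
    exact ⟨fun _ => x₀, finZeroElim, rfl, fun i => by rwa [Fin.fin_one_eq_zero i],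
      finZeroElim⟩
  | succ N ih =>
    obtain ⟨xs, bs, h0, hp, hr⟩ := ih (fun i => p i.castSucc) (fun i => r i.castSucc) h₀
      (fun i x hx => by simpa only [Fin.succ_castSucc] using hstep i.castSucc x hx)
    obtain ⟨y, b, hry, hpy⟩ := hstep (Fin.last N) (xs (Fin.last N)) (hp (Fin.last N))
    refine ⟨Fin.snoc xs y, Fin.snoc bs b, by simpa using h0, fun i => ?_, fun i => ?_⟩
    · induction i using Fin.lastCases with
      | last => simpa using hpy
      | cast i => simpa using hp i
    · induction i using Fin.lastCases with
      | last => simpa using hry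
      | cast i => simpa only [Fin.succ_castSucc, Fin.snoc_castSucc] using hr i

namespace SimpleGraph

variable {V : Type*} {G S T : SimpleGraph V}

theorem IsAcyclic.mem_edges_of_isPath (hT : T.IsAcyclic) {x y : V} (hxy : T.Adj x y)
    {p : G.Walk x y} (hp : p.IsPath) (hpT : ∀ e ∈ p.edges, e ∈ T.edgeSet) :
    s(x, y) ∈ p.edges := by
  have := congrArg (fun q : T.Path x y => q.1.edges)
    ((hT.subsingleton_path x y).elim ⟨p.transfer T hpT, hp.transfer hpT⟩ (Path.singleton hxy))
  simp_all [Walk.edges_transfer]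

theorem IsTree.eq_of_connected_of_le (hT : T.IsTree) (hG : G.Connected) (hle : G ≤ T) :
    G = T :=
  (isTree_iff_minimal_connected.mp hT).eq_of_le hG hle

theorem edgeSet_sup_edge_deleteEdges {x y : V} (hxy : x ≠ y) {g : Sym2 V} (hg : g ≠ s(x, y)) :
    ((G ⊔ edge x y).deleteEdges {g}).edgeSet = insert s(x, y) (G.edgeSet \ {g}) := by
  rw [edgeSet_deleteEdges, edgeSet_sup, edgeSet_edge_of_ne hxy, Set.union_singleton,
    Set.insert_sdiff_singleton_comm hg.symm]

theorem IsTree.isTree_sup_edge_deleteEdges [Finite V] (hG : G.IsTree) {x y : V}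
    (hxy : ¬ G.Adj x y) (hne : x ≠ y) {p : G.Walk x y} (hp : p.IsPath) {g : Sym2 V}
    (hg : g ∈ p.edges) : ((G ⊔ edge x y).deleteEdges {g}).IsTree := by
  have hadj : (G ⊔ edge x y).Adj y x := Or.inr (by simp [edge_adj, hne.symm])
  have hcycle : (Walk.cons hadj (p.mapLe le_sup_left)).IsCycle := by
    rw [Walk.cons_isCycle_iff, Walk.edges_mapLe_eq_edges]
    exact ⟨hp.mapLe _, fun h => hxy (p.adj_of_mem_edges h).symm⟩
  have hgG : g ∈ G.edgeSet := p.edges_subset_edgeSet hg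
  have hgxy : g ≠ s(x, y) := fun h => hxy (by rwa [h] at hgG)
  obtain ⟨u, v⟩ := g
  have hbridge : ¬ (G ⊔ edge x y).IsBridge s(u, v) := fun hb =>
    hb.notMem_edges_of_isCycle hcycle (by simp [hg])
  rw [isTree_iff_connected_and_card]
  refine ⟨(hG.connected.mono le_sup_left).connected_delete_edge_of_not_isBridge hbridge, ?_⟩
  have hcard := (isTree_iff_connected_and_card.mp hG).2
  rw [Nat.card_coe_set_eq] at hcard ⊢
  rw [edgeSet_sup_edge_deleteEdges hne hgxy, Set.ncard_insert_of_notMem (fun h => hxy h.1),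
    Set.ncard_sdiff_singleton_of_mem hgG]
  have := (Set.ncard_pos (Set.toFinite _)).mpr ⟨_, hgG⟩
  omega

theorem mem_edgeSet_iff_of_exchanges {N : ℕ} {Ts : Fin (N + 1) → SimpleGraph V}
    {a e : Fin N → Sym2 V}
    (hstep : ∀ i, (Ts i.succ).edgeSet = insert (a i) ((Ts i.castSucc).edgeSet \ {e i}))
    (hfresh : ∀ i, ∀ j < i, a j ≠ e i) (i : Fin (N + 1)) {f : Sym2 V} :
    f ∈ (Ts i).edgeSet ↔
      (f ∈ (Ts 0).edgeSet ∧ ∀ j : Fin N, j.castSucc < i → e j ≠ f) ∨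
      ∃ j : Fin N, j.castSucc < i ∧ a j = f := by
  induction i using Fin.induction with
  | zero => simp
  | succ i ih =>
    rw [hstep, Set.mem_insert_iff, Set.mem_sdiff, ih, Set.mem_singleton_iff]
    simp only [Fin.castSucc_lt_succ_iff, Fin.castSucc_lt_castSucc_iff, le_iff_lt_or_eq]
    have := hfresh i
    grind

theorem forall_mem_and_injective_of_exchanges {N : ℕ} {Ts : Fin (N + 1) → SimpleGraph V}
    {a e : Fin N → Sym2 V} (hmem : ∀ i, e i ∈ (Ts i.castSucc).edgeSet)
    (hstep : ∀ i, (Ts i.succ).edgeSet = insert (a i) ((Ts i.castSucc).edgeSet \ {e i}))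
    (hfresh : ∀ i, ∀ j < i, a j ≠ e i) :
    (∀ i, e i ∈ (Ts 0).edgeSet) ∧ Function.Injective e := by
  have key i := (mem_edgeSet_iff_of_exchanges hstep hfresh i.castSucc).mp (hmem i)
  simp only [Fin.castSucc_lt_castSucc_iff] at key
  refine ⟨fun i => ?_, Function.Injective.of_lt_imp_ne fun j i hji => ?_⟩
  · rcases key i with h | ⟨j, hj, h⟩
    exacts [h.1, absurd h (hfresh i j hj)]
  · rcases key i with h | ⟨k, hk, h⟩
    exacts [h.2 j hji, absurd h (hfresh i k hk)]

variable [Fintype V]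

theorem treeWeight_add_eq_of_edgeSet_eq_insert {w : Sym2 V → ℝ} {a g : Sym2 V}
    (ha : a ∉ G.edgeSet) (hg : g ∈ G.edgeSet) (hS : S.edgeSet = insert a (G.edgeSet \ {g})) :
    treeWeight w S + w g = treeWeight w G + w a := by
  have hfin : (Set.toFinite S.edgeSet).toFinset =
      insert a ((Set.toFinite G.edgeSet).toFinset.erase g) := by
    ext; simp [hS, and_comm]
  rw [treeWeight, treeWeight, hfin, Finset.sum_insert (by simp [ha]),
    ← Finset.sum_erase_add _ w ((Set.Finite.mem_toFinset _).2 hg)]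
  ring

theorem sum_le_treeWeight {ι : Type*} [Fintype ι] {w : Sym2 V → ℝ} (hw : ∀ e, 0 ≤ w e)
    {f : ι → Sym2 V} (hf : f.Injective) (hfG : ∀ i, f i ∈ G.edgeSet) :
    ∑ i, w (f i) ≤ treeWeight w G := by
  rw [← Function.Embedding.coeFn_mk f hf, ← Finset.sum_map Finset.univ ⟨f, hf⟩ w,
    treeWeight]
  exact Finset.sum_le_sum_of_subset_of_nonneg (by intro; simp; grind) fun e _ _ => hw e

theorem treeWeight_eq_sum {ι : Type*} [Fintype ι] {w : Sym2 V → ℝ}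
    {f : ι → Sym2 V} (hf : f.Injective) (hG : G.edgeSet = Set.range f) :
    treeWeight w G = ∑ i, w (f i) := by
  rw [← Function.Embedding.coeFn_mk f hf, ← Finset.sum_map Finset.univ ⟨f, hf⟩ w,
    treeWeight]
  congr 1
  ext; simp [hG]

def IsMinSpanningTree (w : Sym2 V → ℝ) (T : SimpleGraph V) : Prop :=
  T.IsTree ∧ ∀ G : SimpleGraph V, G.IsTree → treeWeight w T ≤ treeWeight w G

variable {w : Sym2 V → ℝ}

theorem IsMinSpanningTree.le_of_mem_edges (hT : IsMinSpanningTree w T) {u v : V}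
    (huv : ¬ T.Adj u v) (hne : u ≠ v) {p : T.Walk u v} (hp : p.IsPath) {f : Sym2 V}
    (hf : f ∈ p.edges) : w f ≤ w s(u, v) := by
  have hfT : f ∈ T.edgeSet := p.edges_subset_edgeSet hf
  have := hT.2 _ (hT.1.isTree_sup_edge_deleteEdges huv hne hp hf)
  rw [← add_le_add_iff_right (w f), treeWeight_add_eq_of_edgeSet_eq_insert huv hfT
    (edgeSet_sup_edge_deleteEdges hne fun h => huv (by rwa [h] at hfT))] at this
  linarith

theorem IsMinSpanningTree.exists_exchange_edge (hT : IsMinSpanningTree w T) (hS : S.IsTree)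
    {x y : V} (hxy : T.Adj x y) (hnot : ¬ S.Adj x y)
    (hlight : ∀ f ∈ T.edgeSet, w f < w s(x, y) → f ∈ S.edgeSet) :
    ∃ g ∈ S.edgeSet, g ∉ T.edgeSet ∧ w s(x, y) ≤ w g ∧
      ((S ⊔ edge x y).deleteEdges {g}).IsTree := by
  obtain ⟨p, hp⟩ := hS.connected.exists_isPath x y
  obtain ⟨g, hgp, hgT⟩ : ∃ g ∈ p.edges, g ∉ T.edgeSet := by
    by_contra! h
    exact hnot (p.adj_of_mem_edges (hT.1.isAcyclic.mem_edges_of_isPath hxy hp h))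
  refine ⟨g, p.edges_subset_edgeSet hgp, hgT, ?_,
    hS.isTree_sup_edge_deleteEdges hnot hxy.ne hp hgp⟩
  by_contra! hlt
  obtain ⟨u, v⟩ := g
  have huv : S.Adj u v := p.adj_of_mem_edges hgp
  obtain ⟨q, hq⟩ := hT.1.connected.exists_isPath u v
  have hqS : ∀ f ∈ q.edges, f ∈ S.edgeSet := fun f hf =>
    hlight f (q.edges_subset_edgeSet hf) ((hT.le_of_mem_edges hgT huv.ne hq hf).trans_lt hlt)
  exact hgT (q.edges_subset_edgeSet (hS.isAcyclic.mem_edges_of_isPath huv hq hqS))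

theorem IsMinSpanningTree.exists_exchange {N : ℕ} (hT : IsMinSpanningTree w T)
    {a : Fin N → Sym2 V} (ha : a.Injective) (hrange : T.edgeSet = Set.range a)
    (hsorted : Monotone fun i => w (a i)) (hS : S.IsTree) (i : Fin N)
    (hprev : ∀ j < i, a j ∈ S.edgeSet) :
    ∃ (S' : SimpleGraph V) (g : Sym2 V), S'.IsTree ∧ (∀ j ≤ i, a j ∈ S'.edgeSet) ∧
      g ∈ S.edgeSet ∧ (∀ j < i, a j ≠ g) ∧ S'.edgeSet = insert (a i) (S.edgeSet \ {g}) ∧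
      w (a i) ≤ w g := by
  suffices ∃ (S' : SimpleGraph V) (g : Sym2 V), S'.IsTree ∧ g ∈ S.edgeSet ∧
      (∀ j < i, a j ≠ g) ∧ S'.edgeSet = insert (a i) (S.edgeSet \ {g}) ∧ w (a i) ≤ w g by
    obtain ⟨S', g, hS', hg, hfresh, hE, hle⟩ := this
    refine ⟨S', g, hS', fun j hj => ?_, hg, hfresh, hE, hle⟩
    rw [hE]
    rcases hj.lt_or_eq with hj | rfl
    exacts [Or.inr ⟨hprev j hj, hfresh j hj⟩, Or.inl rfl]
  by_cases hi : a i ∈ S.edgeSet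
  · exact ⟨S, a i, hS, hi, fun j hj => ha.ne hj.ne, by simp [hi], le_rfl⟩
  have haT : a i ∈ T.edgeSet := hrange ▸ ⟨i, rfl⟩
  obtain ⟨x, y, hxy⟩ := Sym2.exists.mp ⟨a i, rfl⟩
  rw [hxy] at hi haT ⊢
  have hlight : ∀ f ∈ T.edgeSet, w f < w s(x, y) → f ∈ S.edgeSet := by
    rintro f hf hlt
    obtain ⟨j, rfl⟩ := hrange ▸ hf
    exact hprev j (lt_of_not_ge fun hij => hlt.not_ge (hxy ▸ hsorted hij))
  obtain ⟨g, hgS, hgT, hle, htree⟩ := hT.exists_exchange_edge hS haT hi hlight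
  refine ⟨_, g, htree, hgS, fun j _ h => hgT (h ▸ hrange ▸ ⟨j, rfl⟩),
    edgeSet_sup_edge_deleteEdges haT.ne fun h => hi (h ▸ hgS), hle⟩

end SimpleGraph

theorem mst_exchange_general {V : Type*} [Fintype V]
    (n : ℕ)
    (ε : ℝ) (hε : 0 < ε) (D D' : Sym2 V → ℝ)
    (hDnonneg : ∀ e, 0 ≤ D e)
    (happrox : ∀ a b : Sym2 V, D' a ≤ D' b → D a ≤ (1 + ε) * D b)
    (T T' : SimpleGraph V) (hT : T.IsTree) (hT' : T'.IsTree)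
    (hmin' : ∀ G : SimpleGraph V, G.IsTree → treeWeight D' T' ≤ treeWeight D' G)
    (e' : Fin (n - 1) → Sym2 V) (he'inj : Function.Injective e')
    (he'range : T'.edgeSet = Set.range e')
    (hsorted : ∀ i j : Fin (n - 1), i ≤ j → D' (e' i) ≤ D' (e' j)) :
    (∃ (Ts : Fin (n - 1 + 1) → SimpleGraph V) (e : Fin (n - 1) → Sym2 V),
      Ts 0 = T ∧ Ts (Fin.last (n - 1)) = T' ∧
      (∀ i : Fin (n - 1 + 1), (Ts i).IsTree) ∧
      (∀ i : Fin (n - 1),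
        e i ∈ (Ts i.castSucc).edgeSet ∧
        (Ts i.succ).edgeSet = insert (e' i) ((Ts i.castSucc).edgeSet \ {e i}) ∧
        D' (e' i) ≤ D' (e i) ∧
        D (e' i) ≤ (1 + ε) * D (e i))) ∧
    treeWeight D T' ≤ (1 + ε) * treeWeight D T := by
  have hmst : SimpleGraph.IsMinSpanningTree D' T' := ⟨hT', hmin'⟩
  obtain ⟨Ts, e, h0, htree, hstep⟩ := Fin.exists_chain
    (fun k (S : SimpleGraph V) =>
      S.IsTree ∧ ∀ j : Fin (n - 1), j.castSucc < k → e' j ∈ S.edgeSet)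
    (fun i (S S' : SimpleGraph V) g => g ∈ S.edgeSet ∧ (∀ j < i, e' j ≠ g) ∧
      S'.edgeSet = insert (e' i) (S.edgeSet \ {g}) ∧ D' (e' i) ≤ D' g)
    ⟨hT, fun j hj => absurd hj (Fin.not_lt_zero _)⟩ fun i S ⟨hS, hprev⟩ => by
      obtain ⟨S', g, hS', hnext, hexch⟩ :=
        hmst.exists_exchange he'inj he'range hsorted hS i
          fun j hj => hprev j (Fin.castSucc_lt_castSucc_iff.2 hj)
      exact ⟨S', g, hexch, hS', fun j hj => hnext j (Fin.castSucc_lt_succ_iff.1 hj)⟩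
  simp only [forall_and] at htree hstep
  obtain ⟨htree, hinserted⟩ := htree
  obtain ⟨hmem, hfresh, hE, hle⟩ := hstep
  have hlast : T' = Ts (Fin.last _) := (htree _).eq_of_connected_of_le hT'.connected <| by
    rw [← SimpleGraph.edgeSet_subset_edgeSet, he'range]
    rintro _ ⟨j, rfl⟩
    exact hinserted _ j (Fin.castSucc_lt_last j)
  obtain ⟨heT, he⟩ := SimpleGraph.forall_mem_and_injective_of_exchanges hmem hE hfresh
  refine ⟨⟨Ts, e, h0, hlast.symm, htree,
    fun i => ⟨hmem i, hE i, hle i, happrox _ _ (hle i)⟩⟩, ?_⟩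
  calc treeWeight D T' = ∑ i, D (e' i) := SimpleGraph.treeWeight_eq_sum he'inj he'range
    _ ≤ ∑ i, (1 + ε) * D (e i) := Finset.sum_le_sum fun i _ => happrox _ _ (hle i)
    _ = (1 + ε) * ∑ i, D (e i) := (Finset.mul_sum ..).symm
    _ ≤ (1 + ε) * treeWeight D T := by
      gcongr
      exact h0 ▸ SimpleGraph.sum_le_treeWeight hDnonneg he heT

/-- Exchange argument for spanning trees: if `D'` ε-approximates `D`, `T'` is a
minimum spanning tree under `D'` whose edges `e' 0, …, e' (n-2)` are sorted by
increasing `D'`-weight, and `T` is any spanning tree, then there is a sequence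
of spanning trees `Ts 0 = T, …, Ts (n-1) = T'` where each `Ts (i+1)` is
obtained from `Ts i` by inserting `e' i` and deleting an edge `e i` of `Ts i`
with `D'(e' i) ≤ D'(e i)`; consequently `D(e' i) ≤ (1+ε)·D(e i)` for every `i`,
and the `D`-weight of `T'` is at most `(1+ε)` times that of `T`. -/
theorem mst_exchange {V : Type*} [Fintype V] [DecidableEq V]
    (n : ℕ) (hn : n = Fintype.card V) (hn1 : 1 ≤ n)
    (ε : ℝ) (hε : 0 < ε) (D D' : Sym2 V → ℝ)
    (hDnonneg : ∀ e, 0 ≤ D e) (hD'nonneg : ∀ e, 0 ≤ D' e)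
    (happrox : ∀ a b : Sym2 V, D' a ≤ D' b → D a ≤ (1 + ε) * D b)
    (T T' : SimpleGraph V) (hT : T.IsTree) (hT' : T'.IsTree)
    (hmin' : ∀ G : SimpleGraph V, G.IsTree → treeWeight D' T' ≤ treeWeight D' G)
    (e' : Fin (n - 1) → Sym2 V) (he'inj : Function.Injective e')
    (he'range : T'.edgeSet = Set.range e')
    (hsorted : ∀ i j : Fin (n - 1), i ≤ j → D' (e' i) ≤ D' (e' j)) :
    (∃ (Ts : Fin (n - 1 + 1) → SimpleGraph V) (e : Fin (n - 1) → Sym2 V),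
      Ts 0 = T ∧ Ts (Fin.last (n - 1)) = T' ∧
      (∀ i : Fin (n - 1 + 1), (Ts i).IsTree) ∧
      (∀ i : Fin (n - 1),
        e i ∈ (Ts i.castSucc).edgeSet ∧
        (Ts i.succ).edgeSet = insert (e' i) ((Ts i.castSucc).edgeSet \ {e i}) ∧
        D' (e' i) ≤ D' (e i) ∧
        D (e' i) ≤ (1 + ε) * D (e i))) ∧
    treeWeight D T' ≤ (1 + ε) * treeWeight D T :=
  mst_exchange_general n ε hε D D' hDnonneg happrox T T' hT hT' hmin' e' he'inj he'range hsorted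
end

section
/- If T_opt is a minimum spanning tree of P under distance D and T is a spanning tree with weight_D(T) > (1+ε)·weight_D(T_opt), then there exists an edge φ of T_opt such that (1+ε)·D(φ) < D(out(T,φ)), where out(T,φ) is the heaviest (under D) edge of the cycle created by inserting φ into T. -/
open scoped Classical

/-!
Suppose every edge `pq` of `Topt` were joined in `T` by a path whose edges all weigh at most
`(1 + ε) D(pq)`. Deleting an edge `pq ∉ T` from a tree `G` cuts it in two, and the `T`-path from
`p` to `q` has an edge `ab` crossing the cut; `G - pq + ab` is again a tree, it shares one more
edge with `T`, and `D(ab) ≤ (1 + ε) D(pq)`. Iterating turns `Topt` into `T` while charging each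
edge `φ` of `Topt` at most `(1 + ε) D(φ)`, so `weight T ≤ (1 + ε) weight Topt`.
-/

theorem treeWeight_eq_sum_edgeFinset {V : Type*} [Fintype V] (w : Sym2 V → ℝ)
    (G : SimpleGraph V) [Fintype G.edgeSet] : treeWeight w G = ∑ e ∈ G.edgeFinset, w e := by
  rw [treeWeight, Set.toFinite_toFinset]
  rfl

namespace SimpleGraph

variable {V : Type*} {G T : SimpleGraph V}

theorem Preconnected.reachable_deleteEdges_or (hG : G.Preconnected) (x y w : V) :
    (G.deleteEdges {s(x, y)}).Reachable w x ∨ (G.deleteEdges {s(x, y)}).Reachable w y := by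
  obtain ⟨P, hP⟩ := hG.exists_isPath w x
  by_cases heP : s(x, y) ∉ P.edges
  · exact .inl ⟨P.toDeleteEdges {s(x, y)} fun _ he h ↦ heP (h ▸ he)⟩
  rw [not_not] at heP
  have hyP := P.snd_mem_support_of_mem_edges heP
  have hxP := Walk.endpoint_notMem_support_takeUntil hP hyP (P.adj_of_mem_edges heP).ne
  have heP' : s(x, y) ∉ (P.takeUntil y hyP).edges :=
    fun h ↦ hxP <| (P.takeUntil y hyP).fst_mem_support_of_mem_edges h
  exact .inr ⟨(P.takeUntil y hyP).toDeleteEdges {s(x, y)} fun _ he h ↦ heP' (h ▸ he)⟩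

theorem IsTree.isTree_deleteEdges_sup_edge (hG : G.IsTree) {p q a b : V}
    (hpa : (G.deleteEdges {s(p, q)}).Reachable p a)
    (hpb : ¬(G.deleteEdges {s(p, q)}).Reachable p b) :
    (G.deleteEdges {s(p, q)} ⊔ edge a b).IsTree := by
  set H := G.deleteEdges {s(p, q)}
  have hab : ¬H.Reachable a b := fun h ↦ hpb (hpa.trans h)
  have hHab : H ≤ H ⊔ edge a b := le_sup_left
  have hbq : H.Reachable b q :=
    (hG.connected.preconnected.reachable_deleteEdges_or p q b).resolve_left fun h ↦ hpb h.symm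
  have hqp : (H ⊔ edge a b).Reachable q p := by
    have hne : a ≠ b := by rintro rfl; exact hab .rfl
    have hadj : (H ⊔ edge a b).Adj a b := Or.inr <| by simp [edge_adj, hne]
    exact ((hbq.symm.mono hHab).trans hadj.reachable.symm).trans (hpa.symm.mono hHab)
  refine ⟨(connected_iff_exists_forall_reachable _).2 ⟨p, fun w ↦ ?_⟩,
    (hG.isAcyclic.anti (deleteEdges_le _)).sup_edge_of_not_reachable hab⟩
  rcases hG.connected.preconnected.reachable_deleteEdges_or p q w with h | h
  · exact (h.mono hHab).symm
  · exact ((h.mono hHab).trans hqp).symm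

theorem IsTree.exists_isTree_deleteEdges_sup_edge (hG : G.IsTree) {p q : V} (hpq : G.Adj p q)
    (W : T.Walk p q) :
    ∃ a b, s(a, b) ∈ W.edges ∧ s(a, b) ∉ (G.deleteEdges {s(p, q)}).edgeSet ∧
      (G.deleteEdges {s(p, q)} ⊔ edge a b).IsTree := by
  set H := G.deleteEdges {s(p, q)}
  have hbridge : ¬H.Reachable p q := isAcyclic_iff_forall_adj_isBridge.mp hG.isAcyclic hpq
  obtain ⟨d, hd, hpa, hpb⟩ := W.exists_boundary_dart {v | H.Reachable p v} .rfl hbridge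
  exact ⟨d.fst, d.snd, List.mem_map_of_mem hd, fun hab ↦ hpb (hpa.trans (Adj.reachable hab)),
    hG.isTree_deleteEdges_sup_edge hpa hpb⟩

theorem edgeFinset_deleteEdges_sup_edge {p q a b : V} (hab : a ≠ b) [Fintype G.edgeSet]
    [Fintype (G.deleteEdges {s(p, q)} ⊔ edge a b).edgeSet] :
    (G.deleteEdges {s(p, q)} ⊔ edge a b).edgeFinset =
      insert s(a, b) (G.edgeFinset.erase s(p, q)) := by
  ext e
  simp [edgeSet_deleteEdges, edgeSet_edge_of_ne hab, and_comm]

theorem IsTree.edgeFinset_eq_of_subset [Fintype V] [Fintype G.edgeSet] [Fintype T.edgeSet]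
    (hG : G.IsTree) (hT : T.IsTree) (h : G.edgeFinset ⊆ T.edgeFinset) :
    G.edgeFinset = T.edgeFinset :=
  Finset.eq_of_subset_of_card_le h <| by
    have := hT.card_edgeFinset
    have := hG.card_edgeFinset
    omega

theorem IsTree.sum_edgeFinset_le [Fintype V] [Fintype T.edgeSet] [Fintype G.edgeSet]
    (hT : T.IsTree) (hG : G.IsTree) (w w' : Sym2 V → ℝ)
    (h : ∀ p q, G.Adj p q → ¬T.Adj p q → ∃ W : T.Walk p q, ∀ e ∈ W.edges, w e ≤ w' s(p, q)) :
    ∑ e ∈ T.edgeFinset, w e ≤ ∑ e ∈ G.edgeFinset, if e ∈ T.edgeSet then w e else w' e := by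
  induction hn : (G.edgeFinset \ T.edgeFinset).card generalizing G with
  | zero =>
    rw [hG.edgeFinset_eq_of_subset hT
      (Finset.sdiff_eq_empty_iff_subset.mp (Finset.card_eq_zero.mp hn))]
    exact (Finset.sum_congr rfl fun e he ↦ if_pos (mem_edgeFinset.mp he)).ge
  | succ n ih =>
    obtain ⟨φ, hφ⟩ : (G.edgeFinset \ T.edgeFinset).Nonempty :=
      Finset.card_pos.mp (by omega)
    obtain ⟨hφG, hφT⟩ := Finset.mem_sdiff.mp hφ
    cases φ with | h p q => ?_
    obtain ⟨W, hW⟩ :=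
      h p q (mem_edgeFinset.mp hφG) fun hpq ↦ hφT (mem_edgeFinset.mpr hpq)
    obtain ⟨a, b, habW, habH, hG'⟩ :=
      hG.exists_isTree_deleteEdges_sup_edge (mem_edgeFinset.mp hφG) W
    have habT : T.Adj a b := W.adj_of_mem_edges habW
    have hedges := edgeFinset_deleteEdges_sup_edge (G := G) (p := p) (q := q) habT.ne
    have habG : s(a, b) ∉ G.edgeFinset.erase s(p, q) := by
      simpa [edgeSet_deleteEdges, and_comm] using habH
    have hcard : ((G.deleteEdges {s(p, q)} ⊔ edge a b).edgeFinset \ T.edgeFinset).card = n := by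
      rw [hedges, Finset.insert_sdiff_of_mem _ (mem_edgeFinset.mpr habT),
        Finset.erase_sdiff_comm, Finset.card_erase_of_mem hφ, hn, Nat.add_sub_cancel]
    have hwalks : ∀ x y, (G.deleteEdges {s(p, q)} ⊔ edge a b).Adj x y → ¬T.Adj x y →
        ∃ W : T.Walk x y, ∀ e ∈ W.edges, w e ≤ w' s(x, y) := by
      refine fun x y hxy hxyT ↦ h x y ?_ hxyT
      rcases hxy with hxy | hxy
      · exact deleteEdges_le _ hxy
      · obtain ⟨⟨rfl, rfl⟩ | ⟨rfl, rfl⟩, -⟩ := (edge_adj ..).mp hxy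
        exacts [absurd habT hxyT, absurd habT.symm hxyT]
    calc ∑ e ∈ T.edgeFinset, w e
        ≤ ∑ e ∈ (G.deleteEdges {s(p, q)} ⊔ edge a b).edgeFinset,
            if e ∈ T.edgeSet then w e else w' e := ih hG' hwalks hcard
      _ = ∑ e ∈ G.edgeFinset, (if e ∈ T.edgeSet then w e else w' e)
            + (w s(a, b) - w' s(p, q)) := by
          rw [hedges, Finset.sum_insert habG, Finset.sum_erase_eq_sub hφG,
            if_pos (T.mem_edgeSet.mpr habT), if_neg (mt mem_edgeFinset.mpr hφT)]
          ring
      _ ≤ _ := by linarith [hW _ habW]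

end SimpleGraph

theorem exists_improving_edge_general {V : Type*} [Fintype V] (ε : ℝ) (hε : 0 < ε)
    (D : Sym2 V → ℝ) (hD : ∀ e, 0 ≤ D e)
    (T Topt : SimpleGraph V) (hT : T.IsTree) (hTopt : Topt.IsTree)
    (hheavy : (1 + ε) * treeWeight D Topt < treeWeight D T) :
    ∃ p q : V, Topt.Adj p q ∧
      ∀ (W : T.Walk p q), W.IsPath →
        ∃ e ∈ W.edges, (1 + ε) * D s(p, q) < D e := by
  by_contra! hlight
  have hexchange := hT.sum_edgeFinset_le hTopt D (fun e ↦ (1 + ε) * D e)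
    fun p q hpq _ ↦ (hlight p q hpq).imp fun _ hW ↦ hW.2
  have hscale : ∀ e ∈ Topt.edgeFinset,
      (if e ∈ T.edgeSet then D e else (1 + ε) * D e) ≤ (1 + ε) * D e := fun e _ ↦ by
    split_ifs
    exacts [le_mul_of_one_le_left (hD e) (by linarith), le_rfl]
  rw [treeWeight_eq_sum_edgeFinset, treeWeight_eq_sum_edgeFinset, Finset.mul_sum] at hheavy
  linarith [Finset.sum_le_sum hscale]

/-- If `Topt` is a minimum spanning tree under `D` and `T` is a spanning tree
with `weight_D(T) > (1+ε)·weight_D(Topt)`, then some edge `φ = pq` of `Topt`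
satisfies `(1+ε)·D(φ) < D(e)` for some edge `e` of the `T`-path between `p` and
`q` (the cycle created by inserting `φ` into `T`); in particular this holds for
the heaviest edge `out(T,φ)` of that cycle. -/
theorem exists_improving_edge {V : Type*} [Fintype V] (ε : ℝ) (hε : 0 < ε)
    (D : Sym2 V → ℝ) (hD : ∀ e, 0 ≤ D e)
    (T Topt : SimpleGraph V) (hT : T.IsTree) (hTopt : Topt.IsTree)
    (hmin : ∀ G : SimpleGraph V, G.IsTree → treeWeight D Topt ≤ treeWeight D G)
    (hheavy : (1 + ε) * treeWeight D Topt < treeWeight D T) :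
    ∃ p q : V, Topt.Adj p q ∧
      ∀ (W : T.Walk p q), W.IsPath →
        ∃ e ∈ W.edges, (1 + ε) * D s(p, q) < D e :=
  exists_improving_edge_general ε hε D hD T Topt hT hTopt hheavy
end
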